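/- Let W(ξ,t) = −1/(1+|ξ|²+|t|²) on ℝ³ × ℝ (the UV-regularized Nelson model, d = 3). Then there is a constant C < ∞ such that |∇_ξ Q(x,ξ,a)| ≤ C(1+|a|)^{−1} for all x ∈ 𝒳, a ≥ 0 and ξ ∈ ℝ³; in particular Q(x,ξ,a) ≤ C(1+|ξ|) uniformly in x ∈ 𝒳 and a ≥ 0, i.e. the Nelson model satisfies hypothesis (H2). Moreover the Nelson model satisfies hypothesis (H1). -/

import Mathlib

open MeasureTheory Set
open scoped ENNReal NNReal Real

noncomputable section

/-- `d`-dimensional Euclidean space. -/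
abbrev Ed (d : ℕ) : Type := EuclideanSpace ℝ (Fin d)

/-- The space `𝒳` of increments of continuous paths: continuous maps
`x : ℝ² → ℝ^d` with `x_{tt} = 0` and the cocycle property `x_{su} + x_{ut} = x_{st}`. -/
def Inc (d : ℕ) : Type :=
  {x : C(ℝ × ℝ, Ed d) // (∀ t : ℝ, x (t, t) = 0) ∧
    ∀ s u t : ℝ, x (s, u) + x (u, t) = x (s, t)}

instance (d : ℕ) : TopologicalSpace (Inc d) :=
  instTopologicalSpaceSubtype

instance (d : ℕ) : MeasurableSpace (Inc d) := borel (Inc d)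

/-- The zero increment path. -/
def zeroInc (d : ℕ) : Inc d :=
  ⟨0, by intro t; rfl, by intro s u t; show (0 : Ed d) + 0 = 0; simp⟩

/-- The energy `U_I(x) = ∫_{I×I} W(x_{st}, t-s) dt ds` over `I = [a,b]`. -/
def U {d : ℕ} (W : Ed d → ℝ → ℝ) (a b : ℝ) (x : Inc d) : ℝ :=
  ∫ t in Icc a b, ∫ s in Icc a b, W (x.1 (s, t)) (t - s)

/-- `x ⊗_{[a,b]} y` : the increment path equal to `x` on `[a,b]²` and to `y` outside. -/
def blend {d : ℕ} (a b : ℝ) (x y : Inc d) : Inc d :=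
  ⟨⟨fun p => y.1 (p.1, max a (min b p.1)) + x.1 (max a (min b p.1), max a (min b p.2))
      + y.1 (max a (min b p.2), p.2), by
        have hy := y.1.continuous
        have hx := x.1.continuous
        fun_prop⟩,
    by
      intro t
      show y.1 (t, max a (min b t)) + x.1 (max a (min b t), max a (min b t))
          + y.1 (max a (min b t), t) = 0
      rw [x.2.1, add_zero, y.2.2, y.2.1],
    by
      intro s u t
      show (y.1 (s, max a (min b s)) + x.1 (max a (min b s), max a (min b u))
            + y.1 (max a (min b u), u))
          + (y.1 (u, max a (min b u)) + x.1 (max a (min b u), max a (min b t))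
            + y.1 (max a (min b t), t))
          = y.1 (s, max a (min b s)) + x.1 (max a (min b s), max a (min b t))
            + y.1 (max a (min b t), t)
      have h1 : y.1 (u, max a (min b u)) = - y.1 (max a (min b u), u) :=
        eq_neg_of_add_eq_zero_right (by rw [y.2.2, y.2.1])
      have h2 : x.1 (max a (min b s), max a (min b u)) + x.1 (max a (min b u), max a (min b t))
          = x.1 (max a (min b s), max a (min b t)) := x.2.2 _ _ _
      rw [h1, ← h2]
      abel⟩

/-- The "cone of influence" `J([a,b])`, as a set of pairs `(t,s)`. -/
def Jset (a b : ℝ) : Set (ℝ × ℝ) :=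
  (Ioi b ×ˢ Iio a) ∪ (Iio a ×ˢ Ioi b) ∪ (Icc a b ×ˢ (Icc a b)ᶜ) ∪ ((Icc a b)ᶜ ×ˢ Icc a b)

/-- The integrand of the interaction `V_{[a,b]}(x,y)` at the point `(t,s)`. -/
def Vint {d : ℕ} (W : Ed d → ℝ → ℝ) (a b : ℝ) (x y : Inc d) (p : ℝ × ℝ) : ℝ :=
  W ((blend a b x y).1 (p.2, p.1)) (p.1 - p.2)
    - W ((blend a b (zeroInc d) y).1 (p.2, p.1)) (p.1 - p.2)

/-- The interaction energy
`V_{[a,b]}(x,y) = ∫_{J([a,b])} [W((x⊗y)_{st}, t-s) - W((0⊗y)_{st}, t-s)] dt ds`. -/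
def V {d : ℕ} (W : Ed d → ℝ → ℝ) (a b : ℝ) (x y : Inc d) : ℝ :=
  ∫ p in Jset a b, Vint W a b x y p

/-- The truncated interaction `V_{[a,b]}^{[a',b']}`. -/
def Vtrunc {d : ℕ} (W : Ed d → ℝ → ℝ) (a b a' b' : ℝ) (x y : Inc d) : ℝ :=
  ∫ p in Jset a b ∩ (Icc a' b' ×ˢ Icc a' b'), Vint W a b x y p

/-- `Q(x,ξ,a)` (as an extended-real absolutely convergent double integral). -/
def Qe {d : ℕ} (W : Ed d → ℝ → ℝ) (x : Inc d) (ξ : Ed d) (a : ℝ) : ℝ≥0∞ :=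
  ∫⁻ t in Iio (0 : ℝ), ∫⁻ s in Ioi (0 : ℝ),
    ENNReal.ofReal |W (ξ + x.1 (s, t)) (a + s - t) - W (x.1 (s, t)) (a + s - t)|

/-- `Q(x,ξ,a)` as a real double integral. -/
def Q {d : ℕ} (W : Ed d → ℝ → ℝ) (x : Inc d) (ξ : Ed d) (a : ℝ) : ℝ :=
  ∫ t in Iio (0 : ℝ), ∫ s in Ioi (0 : ℝ),
    |W (ξ + x.1 (s, t)) (a + s - t) - W (x.1 (s, t)) (a + s - t)|

/-- Hypothesis (H1). -/
def H1 {d : ℕ} (W : Ed d → ℝ → ℝ) : Prop :=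
  (∃ C : ℝ, ∀ a b : ℝ, a ≤ b → ∀ x : Inc d, |U W a b x| ≤ C * (b - a) ^ 2) ∧
  (∃ M : ℝ≥0∞, M ≠ ⊤ ∧ ∀ x : Inc d,
      (∫⁻ t : ℝ, ENNReal.ofReal |W (x.1 (0, t)) (|t|)|) ≤ M)

/-- Hypothesis (H2). -/
def H2 {d : ℕ} (W : Ed d → ℝ → ℝ) : Prop :=
  ∃ C : ℝ, ∀ x : Inc d, ∀ ξ : Ed d, ∀ a : ℝ, 0 ≤ a →
    Qe W x ξ a ≤ ENNReal.ofReal (C * (1 + ‖ξ‖))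

/-- Hypothesis (H3). -/
def H3 {d : ℕ} (W : Ed d → ℝ → ℝ) : Prop :=
  ∃ C : ℝ, ∀ x : Inc d,
    (∫⁻ t in Ioi (0 : ℝ), ∫⁻ s in Iio (0 : ℝ),
        ENNReal.ofReal |W (x.1 (s, t)) (t - s) - W 0 (t - s)|) ≤ ENNReal.ofReal C

/-- Hypothesis (H3b) with decay exponent `γ`. -/
def H3b {d : ℕ} (W : Ed d → ℝ → ℝ) (γ : ℝ) : Prop :=
  2 < γ ∧ ∃ C : ℝ, ∀ ξ : Ed d, ∀ t : ℝ, |W ξ t| ≤ C * (1 + |t|) ^ (-γ)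

/-- The Hessian of `W` in its first argument. -/
def HessW {d : ℕ} (W : Ed d → ℝ → ℝ) (ξ : Ed d) (t : ℝ) : Ed d →L[ℝ] Ed d →L[ℝ] ℝ :=
  fderiv ℝ (fun ζ => fderiv ℝ (fun η => W η t) ζ) ξ

/-- Hypothesis (H4) with constants `K` and `α`. -/
def H4 {d : ℕ} (W : Ed d → ℝ → ℝ) (K α : ℝ) : Prop :=
  3 < α ∧ (∀ t : ℝ, ContDiff ℝ 2 (fun ξ => W ξ t)) ∧
    ∀ ξ : Ed d, ∀ t : ℝ, ‖HessW W ξ t‖ ≤ K * (1 + |t|) ^ (-α)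

/-- `μ` is the law of the increments of a two-sided standard `d`-dimensional Brownian
motion: a probability measure whose coordinate increments are centered Gaussians of
variance `t - s` and whose increments over disjoint intervals (and distinct coordinates)
are independent. -/
def IsWienerMeasure {d : ℕ} (μ : Measure (Inc d)) : Prop :=
  IsProbabilityMeasure μ ∧
  (∀ s t : ℝ, s ≤ t → ∀ j : Fin d,
      μ.map (fun x : Inc d => x.1 (s, t) j) =
        ProbabilityTheory.gaussianReal 0 ((t - s).toNNReal)) ∧
  ∀ n : ℕ, ∀ ts : Fin (n + 1) → ℝ, Monotone ts →
    ProbabilityTheory.iIndepFun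
      (fun (p : Fin n × Fin d) (x : Inc d) => x.1 (ts p.1.castSucc, ts p.1.succ) p.2) μ

/-- The measure `μ_{[a,b]} × δ_{[a,b]^c, y}` : increments distributed as `μ` inside `[a,b]`,
frozen to those of `y` outside. -/
def frozenM {d : ℕ} (μ : Measure (Inc d)) (a b : ℝ) (y : Inc d) : Measure (Inc d) :=
  μ.map (fun x => blend a b x y)

/-- The Boltzmann density `e^{-λ U_{[a,b]}(x) - λ V_{[a,b]}(x,y)}`. -/
def dens {d : ℕ} (W : Ed d → ℝ → ℝ) (l a b : ℝ) (y x : Inc d) : ℝ :=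
  Real.exp (-(l * U W a b x) - l * V W a b x y)

/-- The kernel `π_{[a,b]}(dx|y)` of the specification `Π` (normalized Boltzmann measure). -/
def gk {d : ℕ} (μ : Measure (Inc d)) (W : Ed d → ℝ → ℝ) (l a b : ℝ) (y : Inc d) :
    Measure (Inc d) :=
  (((frozenM μ a b y).withDensity fun x => ENNReal.ofReal (dens W l a b y x)) univ)⁻¹ •
    ((frozenM μ a b y).withDensity fun x => ENNReal.ofReal (dens W l a b y x))

/-- Two increment paths agree over the (time) set `s`. -/
def AgreeOn {d : ℕ} (x y : Inc d) (s : Set ℝ) : Prop :=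
  ∀ p : ℝ × ℝ, p.1 ∈ s → p.2 ∈ s → x.1 p = y.1 p

/-- `f` is `𝓕_{[a,b]}`-measurable: it depends only on the increments inside `[a,b]`. -/
def LocalOn {d : ℕ} (f : Inc d → ℝ) (a b : ℝ) : Prop :=
  ∀ x y : Inc d, AgreeOn x y (Icc a b) → f x = f y

/-- `f` is a local function: `𝓕_I`-measurable for some bounded interval `I`. -/
def IsLocal {d : ℕ} (f : Inc d → ℝ) : Prop :=
  ∃ a b : ℝ, LocalOn f a b

/-- `ν` is a Gibbs measure for the specification `Π` (with reference measure `μ`,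
interaction `W` and coupling `λ`): `ν(f) = ∫ π_I(f|y) ν(dy)` for every bounded
interval `I` and every bounded continuous local `f`. -/
def IsGibbs {d : ℕ} (μ : Measure (Inc d)) (W : Ed d → ℝ → ℝ) (l : ℝ)
    (ν : Measure (Inc d)) : Prop :=
  IsProbabilityMeasure ν ∧
  ∀ a b : ℝ, a ≤ b → ∀ f : Inc d → ℝ, Continuous f → (∃ M : ℝ, ∀ x, |f x| ≤ M) →
    IsLocal f → ∫ x, f x ∂ν = ∫ y, ∫ x, f x ∂(gk μ W l a b y) ∂ν

/-- Translation of increment paths: `(τ_c x)_{st} = x_{s+c, t+c}`. -/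
def shift {d : ℕ} (c : ℝ) (x : Inc d) : Inc d :=
  ⟨⟨fun p => x.1 (p.1 + c, p.2 + c), by
      have hx := x.1.continuous; fun_prop⟩,
    by intro t; exact x.2.1 (t + c),
    by intro s u t; exact x.2.2 (s + c) (u + c) (t + c)⟩

/-- The finite-volume energy `H_T(x) = ∫_{[-T,T]²} W(x_{st}, s-t) ds dt`. -/
def HT {d : ℕ} (W : Ed d → ℝ → ℝ) (T : ℝ) (x : Inc d) : ℝ :=
  ∫ t in Icc (-T) T, ∫ s in Icc (-T) T, W (x.1 (s, t)) (s - t)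

/-- The finite-volume Gibbs measure `μ_{λ,T}`. -/
def muT {d : ℕ} (μ : Measure (Inc d)) (W : Ed d → ℝ → ℝ) (l T : ℝ) : Measure (Inc d) :=
  ((μ.withDensity fun x => ENNReal.ofReal (Real.exp (-(l * HT W T x)))) univ)⁻¹ •
    (μ.withDensity fun x => ENNReal.ofReal (Real.exp (-(l * HT W T x))))

/-- The comparison measure `ω_{[c,e]}` : normalized `e^{λC ‖x_{ce}‖} μ(dx)`. -/
def omegaM {d : ℕ} (μ : Measure (Inc d)) (lC c e : ℝ) : Measure (Inc d) :=
  ((μ.withDensity fun x => ENNReal.ofReal (Real.exp (lC * ‖x.1 (c, e)‖))) univ)⁻¹ •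
    (μ.withDensity fun x => ENNReal.ofReal (Real.exp (lC * ‖x.1 (c, e)‖)))

/-- Restriction to the increments in `[a,b]` (increments outside are set to zero);
its pushforward realizes the marginal of a measure on the σ-field `𝓕_{[a,b]}`. -/
def restr {d : ℕ} (a b : ℝ) (x : Inc d) : Inc d := blend a b x (zeroInc d)

/-- The discrete-model potential `U_{ij}(x) = ∫_i^{i+1} dt ∫_j^{j+1} ds W(x_{ts}, t-s)`. -/
def Uij {d : ℕ} (W : Ed d → ℝ → ℝ) (i j : ℤ) (x : Inc d) : ℝ :=
  ∫ t in Icc (i : ℝ) (i + 1), ∫ s in Icc (j : ℝ) (j + 1), W (x.1 (t, s)) (t - s)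

/-- `M_U(k) = sup_{|i-j| ≥ k} sup_x |U_{ij}(x)|` (in `ℝ≥0∞`). -/
def MU {d : ℕ} (W : Ed d → ℝ → ℝ) (k : ℕ) : ℝ≥0∞ :=
  ⨆ (i : ℤ) (j : ℤ) (_ : (k : ℤ) ≤ |i - j|) (x : Inc d), ENNReal.ofReal |Uij W i j x|

/-- The sup-distance `‖x_i - y_i‖` between the blocks over `τ_i = [iL, (i+1)L]`. -/
def bNorm {d : ℕ} (L : ℝ) (i : ℤ) (x y : Inc d) : ℝ :=
  sSup ((fun p => ‖x.1 p - y.1 p‖) ''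
    (Icc (i * L) ((i + 1) * L) ×ˢ Icc (i * L) ((i + 1) * L)))

/-- `y` and `z` have the same increments on every block `τ_k`, `k ≠ j`. -/
def AgreeOffBlock {d : ℕ} (L : ℝ) (j : ℤ) (y z : Inc d) : Prop :=
  ∀ k : ℤ, k ≠ j → ∀ p : ℝ × ℝ,
    p.1 ∈ Icc (k * L) ((k + 1) * L) → p.2 ∈ Icc (k * L) ((k + 1) * L) → y.1 p = z.1 p

/-- The segment `y^r = y + r (z - y)` in `𝒳`. -/
def lineInc {d : ℕ} (y z : Inc d) (r : ℝ) : Inc d :=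
  ⟨⟨fun p => y.1 p + r • (z.1 p - y.1 p), by
      have hy := y.1.continuous; have hz := z.1.continuous; fun_prop⟩,
    by intro t; simp [y.2.1, z.2.1],
    by
      intro s u t
      show (y.1 (s, u) + r • (z.1 (s, u) - y.1 (s, u)))
          + (y.1 (u, t) + r • (z.1 (u, t) - y.1 (u, t)))
          = y.1 (s, t) + r • (z.1 (s, t) - y.1 (s, t))
      rw [← y.2.2 s u t, ← z.2.2 s u t]
      module⟩

/-- A tempered measure (relative to block size `L`). -/
def Tempered {d : ℕ} (L : ℝ) (ν : Measure (Inc d)) : Prop :=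
  ∃ z : Inc d, ∃ M : ℝ, ∀ i : ℤ, ∫ x, bNorm L i x z ∂ν ≤ M

/-- The second Malliavin derivative `D_t D_s H_T(x) = 2∫_{-T}^{s∧t}du ∫_{s∨t}^{T}dv ∇∇W(x_{uv}, u-v)`. -/
def D2H {d : ℕ} (W : Ed d → ℝ → ℝ) (T s t : ℝ) (x : Inc d) : Ed d →L[ℝ] Ed d →L[ℝ] ℝ :=
  (2 : ℝ) • ∫ u in Icc (-T) (min s t), ∫ v in Icc (max s t) T, HessW W (x.1 (u, v)) (u - v)

/-- `A_{ab}(x) = 2λ ∫_a^b ds ∫_{-T}^s du ∫_s^T dv ∇_ξ W(x_{uv}, u-v)`, the integrated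
Malliavin derivative of `λ H_T` over `[a,b]`. -/
def Aab {d : ℕ} (W : Ed d → ℝ → ℝ) (l T a b : ℝ) (x : Inc d) : Ed d :=
  (2 * l) • ∫ s in Icc a b, ∫ u in Icc (-T) s, ∫ v in Icc s T,
    gradient (fun ξ => W ξ (u - v)) (x.1 (u, v))

/-- The UV-regularized Nelson interaction `W(ξ,t) = -1/(1+|ξ|²+|t|²)`, `d = 3`. -/
def WN : Ed 3 → ℝ → ℝ := fun ξ t => -(1 + ‖ξ‖ ^ 2 + t ^ 2)⁻¹


/-! For `u ≥ 0` the Nelson interaction satisfies `|W(ξ,u) - W(ζ,u)| ≤ 4‖ξ - ζ‖ (1+u)⁻³`,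
and `∫_{t<0} ∫_{s>0} (1+a-t+s)⁻³ ds dt = 1/(2(1+a))`. Hence `ξ ↦ Q(x,ξ,a)` is Lipschitz with
constant `2/(1+a)`, uniformly in `x`; this bounds its gradient and, since `Q(x,0,a) = 0`, gives
(H2). (H1) follows from `|W(ξ,t)| ≤ (1+t²)⁻¹`, which is bounded and integrable in `t`. -/

open Filter Topology

section Kernel

variable {c : ℝ}

lemma hasDerivAt_neg_inv_mul_add_pow (hc : 0 < c) (n : ℕ) {s : ℝ} (hs : 0 ≤ s) :
    HasDerivAt (fun s : ℝ => -(((n : ℝ) + 1) * (c + s) ^ (n + 1))⁻¹)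
      ((c + s) ^ (n + 2))⁻¹ s := by
  have hy : 0 < c + s := by linarith
  have h : HasDerivAt (fun y : ℝ => -(((n : ℝ) + 1) * y ^ (n + 1))⁻¹)
      ((c + s) ^ (n + 2))⁻¹ (c + s) := by
    refine (((hasDerivAt_pow (n + 1) (c + s)).const_mul ((n : ℝ) + 1)).fun_inv
      (by positivity)).fun_neg.congr_deriv ?_
    field_simp
    push_cast
    ring
  exact h.comp_const_add c s

lemma tendsto_neg_inv_mul_add_pow (n : ℕ) :
    Tendsto (fun s : ℝ => -(((n : ℝ) + 1) * (c + s) ^ (n + 1))⁻¹) atTop (𝓝 0) := by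
  have h : Tendsto (fun s : ℝ => ((n : ℝ) + 1) * (c + s) ^ (n + 1)) atTop atTop :=
    ((tendsto_pow_atTop (Nat.succ_ne_zero n)).comp
      (tendsto_atTop_add_const_left _ c tendsto_id)).const_mul_atTop (by positivity)
  simpa using h.inv_tendsto_atTop.neg

lemma integrableOn_Ioi_inv_add_pow (hc : 0 < c) (n : ℕ) :
    IntegrableOn (fun s : ℝ => ((c + s) ^ (n + 2))⁻¹) (Ioi 0) :=
  integrableOn_Ioi_deriv_of_nonneg' (fun _ hs => hasDerivAt_neg_inv_mul_add_pow hc n hs)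
    (fun s hs => by
      have : 0 < c + s := by linarith [mem_Ioi.1 hs]
      positivity)
    (tendsto_neg_inv_mul_add_pow n)

lemma integral_Ioi_inv_add_pow (hc : 0 < c) (n : ℕ) :
    ∫ s in Ioi 0, ((c + s) ^ (n + 2))⁻¹ = (((n : ℝ) + 1) * c ^ (n + 1))⁻¹ := by
  rw [integral_Ioi_of_hasDerivAt_of_tendsto'
    (fun _ hs => hasDerivAt_neg_inv_mul_add_pow hc n hs) (integrableOn_Ioi_inv_add_pow hc n)
    (tendsto_neg_inv_mul_add_pow n)]
  simp

lemma integrableOn_Iio_inv_sub_pow (hc : 0 < c) (n : ℕ) :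
    IntegrableOn (fun t : ℝ => ((c - t) ^ (n + 2))⁻¹) (Iio 0) := by
  rw [← integrable_indicator_iff measurableSet_Iio]
  refine ((integrable_indicator_iff measurableSet_Ioi).2
    (integrableOn_Ioi_inv_add_pow hc n)).comp_neg.congr (Eventually.of_forall fun t => ?_)
  simp [indicator, sub_eq_add_neg]

lemma integral_Iio_inv_sub_pow (hc : 0 < c) (n : ℕ) :
    ∫ t in Iio 0, ((c - t) ^ (n + 2))⁻¹ = (((n : ℝ) + 1) * c ^ (n + 1))⁻¹ := by
  rw [← integral_Iic_eq_integral_Iio, ← integral_Ioi_inv_add_pow hc n]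
  simpa [sub_eq_add_neg] using integral_comp_neg_Iic 0 (fun t => ((c + t) ^ (n + 2))⁻¹)

end Kernel

section Quadrant

variable {F : ℝ → ℝ → ℝ} {c M : ℝ}

lemma integrableOn_Ioi_inv_sub_add_pow_three (hc : 0 < c) {t : ℝ} (ht : t < 0) :
    IntegrableOn (fun s => ((c - t + s) ^ 3)⁻¹) (Ioi 0) :=
  integrableOn_Ioi_inv_add_pow (by linarith) 1

lemma integral_Ioi_inv_sub_add_pow_three (hc : 0 < c) {t : ℝ} (ht : t < 0) :
    ∫ s in Ioi 0, ((c - t + s) ^ 3)⁻¹ = (2 * (c - t) ^ 2)⁻¹ := by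
  have h := integral_Ioi_inv_add_pow (c := c - t) (by linarith) 1
  norm_num at h
  rw [h, mul_inv, one_div, mul_comm]

lemma integrableOn_Ioi_of_abs_le (hFm : Measurable (Function.uncurry F)) (hc : 0 < c)
    (hF : ∀ t < 0, ∀ s > 0, |F t s| ≤ M * ((c - t + s) ^ 3)⁻¹) {t : ℝ} (ht : t < 0) :
    IntegrableOn (F t) (Ioi 0) :=
  ((integrableOn_Ioi_inv_sub_add_pow_three hc ht).const_mul M).mono'
    (hFm.of_uncurry_left.aestronglyMeasurable)
    ((ae_restrict_iff' measurableSet_Ioi).2 (ae_of_all _ fun s hs => hF t ht s hs))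

lemma abs_integral_Ioi_le_of_abs_le (hc : 0 < c)
    (hF : ∀ t < 0, ∀ s > 0, |F t s| ≤ M * ((c - t + s) ^ 3)⁻¹) {t : ℝ} (ht : t < 0) :
    |∫ s in Ioi 0, F t s| ≤ M * (2 * (c - t) ^ 2)⁻¹ := by
  rw [← integral_Ioi_inv_sub_add_pow_three hc ht, ← integral_const_mul]
  exact norm_integral_le_of_norm_le (f := F t)
    ((integrableOn_Ioi_inv_sub_add_pow_three hc ht).const_mul M)
    ((ae_restrict_iff' measurableSet_Ioi).2 (ae_of_all _ fun s hs => hF t ht s hs))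

lemma integrableOn_Iio_inv_two_mul_sub_sq (hc : 0 < c) :
    IntegrableOn (fun t => (2 * (c - t) ^ 2)⁻¹) (Iio 0) := by
  refine IntegrableOn.congr_fun ((integrableOn_Iio_inv_sub_pow hc 0).const_mul 2⁻¹)
    (fun t _ => ?_) measurableSet_Iio
  simp only [zero_add, mul_inv]

lemma integral_Iio_inv_two_mul_sub_sq (hc : 0 < c) :
    ∫ t in Iio 0, (2 * (c - t) ^ 2)⁻¹ = (2 * c)⁻¹ := by
  simp only [mul_inv, integral_const_mul]
  rw [integral_Iio_inv_sub_pow hc 0]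
  norm_num

lemma integrableOn_Iio_integral_Ioi_of_abs_le (hFm : Measurable (Function.uncurry F))
    (hc : 0 < c)
    (hF : ∀ t < 0, ∀ s > 0, |F t s| ≤ M * ((c - t + s) ^ 3)⁻¹) :
    IntegrableOn (fun t => ∫ s in Ioi 0, F t s) (Iio 0) :=
  ((integrableOn_Iio_inv_two_mul_sub_sq hc).const_mul M).mono'
    hFm.stronglyMeasurable.integral_prod_right'.aestronglyMeasurable
    ((ae_restrict_iff' measurableSet_Iio).2
      (ae_of_all _ fun _ ht => abs_integral_Ioi_le_of_abs_le hc hF ht))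

lemma abs_integral_Iio_integral_Ioi_le_of_abs_le (hc : 0 < c)
    (hF : ∀ t < 0, ∀ s > 0, |F t s| ≤ M * ((c - t + s) ^ 3)⁻¹) :
    |∫ t in Iio 0, ∫ s in Ioi 0, F t s| ≤ M * (2 * c)⁻¹ := by
  rw [← integral_Iio_inv_two_mul_sub_sq hc, ← integral_const_mul]
  exact norm_integral_le_of_norm_le (f := fun t => ∫ s in Ioi 0, F t s)
    ((integrableOn_Iio_inv_two_mul_sub_sq hc).const_mul M)
    ((ae_restrict_iff' measurableSet_Iio).2
      (ae_of_all _ fun _ ht => abs_integral_Ioi_le_of_abs_le hc hF ht))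

end Quadrant

section Interaction

variable {d : ℕ} {W : Ed d → ℝ → ℝ} {L : ℝ}

def qIntegrand (W : Ed d → ℝ → ℝ) (x : Inc d) (ξ : Ed d) (a t s : ℝ) : ℝ :=
  |W (ξ + x.1 (s, t)) (a + s - t) - W (x.1 (s, t)) (a + s - t)|

lemma Q_eq_integral_qIntegrand (x : Inc d) (ξ : Ed d) (a : ℝ) :
    Q W x ξ a = ∫ t in Iio 0, ∫ s in Ioi 0, qIntegrand W x ξ a t s := rfl

lemma Qe_eq_lintegral_qIntegrand (x : Inc d) (ξ : Ed d) (a : ℝ) :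
    Qe W x ξ a = ∫⁻ t in Iio 0, ∫⁻ s in Ioi 0, ENNReal.ofReal (qIntegrand W x ξ a t s) :=
  rfl

@[simp]
lemma qIntegrand_zero (x : Inc d) (a t s : ℝ) : qIntegrand W x 0 a t s = 0 := by
  simp [qIntegrand]

lemma measurable_qIntegrand (hW : Measurable (Function.uncurry W)) (x : Inc d) (ξ : Ed d)
    (a : ℝ) : Measurable (Function.uncurry (qIntegrand W x ξ a)) := by
  have hx : Measurable fun p : ℝ × ℝ => x.1 (p.2, p.1) := (x.1.continuous.comp
    (continuous_snd.prodMk continuous_fst)).measurable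
  have hu : Measurable fun p : ℝ × ℝ => a + p.2 - p.1 := by fun_prop
  exact ((hW.comp ((hx.const_add ξ).prodMk hu)).sub (hW.comp (hx.prodMk hu))).abs

lemma abs_qIntegrand_sub_le
    (hL : ∀ ξ ζ u, 0 ≤ u → |W ξ u - W ζ u| ≤ L * ‖ξ - ζ‖ * ((1 + u) ^ 3)⁻¹)
    (x : Inc d) {a : ℝ} (ha : 0 ≤ a) (ξ ζ : Ed d) :
    ∀ t < 0, ∀ s > 0, |qIntegrand W x ξ a t s - qIntegrand W x ζ a t s|
      ≤ L * ‖ξ - ζ‖ * ((1 + a - t + s) ^ 3)⁻¹ := by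
  intro t ht s hs
  have h := hL (ξ + x.1 (s, t)) (ζ + x.1 (s, t)) (a + s - t) (by linarith)
  rw [add_sub_add_right_eq_sub, show 1 + (a + s - t) = 1 + a - t + s by ring] at h
  refine (abs_abs_sub_abs_le_abs_sub _ _).trans ?_
  rwa [sub_sub_sub_cancel_right]

lemma abs_qIntegrand_le
    (hL : ∀ ξ ζ u, 0 ≤ u → |W ξ u - W ζ u| ≤ L * ‖ξ - ζ‖ * ((1 + u) ^ 3)⁻¹)
    (x : Inc d) {a : ℝ} (ha : 0 ≤ a) (ξ : Ed d) :
    ∀ t < 0, ∀ s > 0,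
      |qIntegrand W x ξ a t s| ≤ L * ‖ξ‖ * ((1 + a - t + s) ^ 3)⁻¹ := by
  simpa using abs_qIntegrand_sub_le hL x ha ξ 0

lemma Q_sub_Q (hW : Measurable (Function.uncurry W))
    (hL : ∀ ξ ζ u, 0 ≤ u → |W ξ u - W ζ u| ≤ L * ‖ξ - ζ‖ * ((1 + u) ^ 3)⁻¹)
    (x : Inc d) {a : ℝ} (ha : 0 ≤ a) (ξ ζ : Ed d) :
    Q W x ξ a - Q W x ζ a
      = ∫ t in Iio 0, ∫ s in Ioi 0, (qIntegrand W x ξ a t s - qIntegrand W x ζ a t s) := by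
  have hc : (0 : ℝ) < 1 + a := by linarith
  have hξ := abs_qIntegrand_le hL x ha ξ
  have hζ := abs_qIntegrand_le hL x ha ζ
  rw [Q_eq_integral_qIntegrand, Q_eq_integral_qIntegrand,
    ← integral_sub
      (integrableOn_Iio_integral_Ioi_of_abs_le (measurable_qIntegrand hW x ξ a) hc hξ)
      (integrableOn_Iio_integral_Ioi_of_abs_le (measurable_qIntegrand hW x ζ a) hc hζ)]
  refine setIntegral_congr_fun measurableSet_Iio fun t ht => ?_
  exact (integral_sub (integrableOn_Ioi_of_abs_le (measurable_qIntegrand hW x ξ a) hc hξ ht)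
    (integrableOn_Ioi_of_abs_le (measurable_qIntegrand hW x ζ a) hc hζ ht)).symm

lemma abs_Q_sub_Q_le (hW : Measurable (Function.uncurry W))
    (hL : ∀ ξ ζ u, 0 ≤ u → |W ξ u - W ζ u| ≤ L * ‖ξ - ζ‖ * ((1 + u) ^ 3)⁻¹)
    (x : Inc d) {a : ℝ} (ha : 0 ≤ a) (ξ ζ : Ed d) :
    |Q W x ξ a - Q W x ζ a| ≤ L / 2 * (1 + a)⁻¹ * ‖ξ - ζ‖ := by
  rw [Q_sub_Q hW hL x ha]
  calc _ ≤ L * ‖ξ - ζ‖ * (2 * (1 + a))⁻¹ :=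
        abs_integral_Iio_integral_Ioi_le_of_abs_le (by linarith)
          (abs_qIntegrand_sub_le hL x ha ξ ζ)
    _ = L / 2 * (1 + a)⁻¹ * ‖ξ - ζ‖ := by rw [mul_inv]; ring

lemma Q_zero (x : Inc d) (a : ℝ) : Q W x 0 a = 0 := by
  simp [Q]

lemma Qe_eq_ofReal_Q (hW : Measurable (Function.uncurry W))
    (hL : ∀ ξ ζ u, 0 ≤ u → |W ξ u - W ζ u| ≤ L * ‖ξ - ζ‖ * ((1 + u) ^ 3)⁻¹)
    (x : Inc d) {a : ℝ} (ha : 0 ≤ a) (ξ : Ed d) :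
    Qe W x ξ a = ENNReal.ofReal (Q W x ξ a) := by
  have hc : (0 : ℝ) < 1 + a := by linarith
  have hm := measurable_qIntegrand hW x ξ a
  have hξ := abs_qIntegrand_le hL x ha ξ
  have hnonneg : ∀ t s, 0 ≤ qIntegrand W x ξ a t s := fun _ _ => abs_nonneg _
  rw [Qe_eq_lintegral_qIntegrand, Q_eq_integral_qIntegrand,
    ofReal_integral_eq_lintegral_ofReal (integrableOn_Iio_integral_Ioi_of_abs_le hm hc hξ)
      (ae_of_all _ fun t => integral_nonneg (hnonneg t))]
  refine setLIntegral_congr_fun measurableSet_Iio fun t ht => ?_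
  exact (ofReal_integral_eq_lintegral_ofReal (integrableOn_Ioi_of_abs_le hm hc hξ ht)
    (ae_of_all _ (hnonneg t))).symm

lemma norm_gradient_Q_le (hW : Measurable (Function.uncurry W)) (hL0 : 0 ≤ L)
    (hL : ∀ ξ ζ u, 0 ≤ u → |W ξ u - W ζ u| ≤ L * ‖ξ - ζ‖ * ((1 + u) ^ 3)⁻¹)
    (x : Inc d) {a : ℝ} (ha : 0 ≤ a) (ξ : Ed d) :
    ‖gradient (fun ζ => Q W x ζ a) ξ‖ ≤ L / 2 * (1 + a)⁻¹ := by
  rw [gradient, LinearIsometryEquiv.norm_map]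
  have hc : 0 < 1 + a := by linarith
  have hK : 0 ≤ L / 2 * (1 + a)⁻¹ := by positivity
  exact norm_fderiv_le_of_lip' ℝ hK
    (Eventually.of_forall fun ζ => abs_Q_sub_Q_le hW hL x ha ζ ξ)

lemma H2_of_abs_sub_le (hW : Measurable (Function.uncurry W)) (hL0 : 0 ≤ L)
    (hL : ∀ ξ ζ u, 0 ≤ u → |W ξ u - W ζ u| ≤ L * ‖ξ - ζ‖ * ((1 + u) ^ 3)⁻¹) :
    H2 W := by
  refine ⟨L / 2, fun x ξ a ha => ?_⟩
  rw [Qe_eq_ofReal_Q hW hL x ha]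
  refine ENNReal.ofReal_le_ofReal ?_
  have hQ := abs_Q_sub_Q_le hW hL x ha ξ 0
  rw [Q_zero, sub_zero, sub_zero] at hQ
  have ha' : (1 + a)⁻¹ ≤ 1 := inv_le_one_of_one_le₀ (by linarith)
  calc Q W x ξ a ≤ L / 2 * (1 + a)⁻¹ * ‖ξ‖ := (le_abs_self _).trans hQ
    _ ≤ L / 2 * 1 * (1 + ‖ξ‖) := by gcongr; linarith [norm_nonneg ξ]
    _ = L / 2 * (1 + ‖ξ‖) := by ring

end Interaction

section Energy

variable {d : ℕ} {W : Ed d → ℝ → ℝ}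

lemma abs_U_le {B : ℝ} (hB : ∀ ξ t, |W ξ t| ≤ B) {a b : ℝ} (hab : a ≤ b) (x : Inc d) :
    |U W a b x| ≤ B * (b - a) ^ 2 := by
  have hvol : volume.real (Icc a b) = b - a := by simp [hab]
  have hinner : ∀ t, |∫ s in Icc a b, W (x.1 (s, t)) (t - s)| ≤ B * (b - a) := fun t => by
    simpa [hvol] using norm_setIntegral_le_of_norm_le_const (μ := volume) (s := Icc a b)
      measure_Icc_lt_top (f := fun s => W (x.1 (s, t)) (t - s)) fun s _ => hB _ _
  calc |U W a b x| ≤ B * (b - a) * (b - a) := by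
        simpa [hvol, U] using norm_setIntegral_le_of_norm_le_const (μ := volume) (s := Icc a b)
          measure_Icc_lt_top (f := fun t => ∫ s in Icc a b, W (x.1 (s, t)) (t - s))
          fun t _ => hinner t
    _ = B * (b - a) ^ 2 := by ring

lemma H1_of_abs_le_inv_one_add_sq (hW : ∀ ξ t, |W ξ t| ≤ (1 + t ^ 2)⁻¹) : H1 W := by
  refine ⟨⟨1, fun a b hab x => abs_U_le (fun ξ t => (hW ξ t).trans ?_) hab x⟩,
    ⟨ENNReal.ofReal π, ENNReal.ofReal_ne_top, fun x => ?_⟩⟩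
  · exact inv_le_one_of_one_le₀ (by nlinarith)
  calc ∫⁻ t, ENNReal.ofReal |W (x.1 (0, t)) (|t|)|
      ≤ ∫⁻ t, ENNReal.ofReal (1 + t ^ 2)⁻¹ :=
        lintegral_mono fun t => ENNReal.ofReal_le_ofReal (by simpa using hW (x.1 (0, t)) |t|)
    _ = ENNReal.ofReal π := by
        rw [← ofReal_integral_eq_lintegral_ofReal integrable_inv_one_add_sq
          (ae_of_all _ fun t => by positivity), integral_univ_inv_one_add_sq]

end Energy

section Nelson

lemma continuous_uncurry_WN : Continuous (Function.uncurry WN) :=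
  (Continuous.inv₀ (by fun_prop) fun p => by positivity).neg

lemma abs_WN_le (ξ : Ed 3) (t : ℝ) : |WN ξ t| ≤ (1 + t ^ 2)⁻¹ := by
  rw [WN, abs_neg, abs_of_pos (by positivity)]
  exact inv_anti₀ (by positivity) (by nlinarith [sq_nonneg ‖ξ‖])

lemma add_mul_one_add_pow_three_le (A B u : ℝ) :
    (A + B) * (1 + u) ^ 3 ≤ 4 * ((1 + A ^ 2 + u ^ 2) * (1 + B ^ 2 + u ^ 2)) := by
  have hsq : ∀ X : ℝ, (1 + u) ^ 2 ≤ 2 * (1 + X ^ 2 + u ^ 2) := fun X => by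
    nlinarith [sq_nonneg (1 - u), sq_nonneg X]
  have hlin : ∀ X : ℝ, X * (1 + u) ≤ 1 + X ^ 2 + u ^ 2 := fun X => by
    nlinarith [sq_nonneg (X - (1 + u)), hsq 0]
  have hA := mul_le_mul (hlin A) (hsq B) (sq_nonneg _) (by positivity)
  have hB := mul_le_mul (hlin B) (hsq A) (sq_nonneg _) (by positivity)
  linarith

lemma abs_WN_sub_le (ξ ζ : Ed 3) {u : ℝ} (hu : 0 ≤ u) :
    |WN ξ u - WN ζ u| ≤ 4 * ‖ξ - ζ‖ * ((1 + u) ^ 3)⁻¹ := by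
  have hP : 0 < 1 + ‖ξ‖ ^ 2 + u ^ 2 := by positivity
  have hQ : 0 < 1 + ‖ζ‖ ^ 2 + u ^ 2 := by positivity
  have hdiff : WN ξ u - WN ζ u = (‖ξ‖ - ‖ζ‖) * (‖ξ‖ + ‖ζ‖)
      / ((1 + ‖ξ‖ ^ 2 + u ^ 2) * (1 + ‖ζ‖ ^ 2 + u ^ 2)) := by
    simp only [WN]
    field_simp
    ring
  have hnum : |‖ξ‖ - ‖ζ‖| * (‖ξ‖ + ‖ζ‖) * (1 + u) ^ 3
      ≤ ‖ξ - ζ‖ * (4 * ((1 + ‖ξ‖ ^ 2 + u ^ 2) * (1 + ‖ζ‖ ^ 2 + u ^ 2))) := by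
    rw [mul_assoc]
    exact mul_le_mul (abs_norm_sub_norm_le ξ ζ)
      (add_mul_one_add_pow_three_le _ _ u)
      (by positivity) (norm_nonneg _)
  rw [hdiff, abs_div, abs_mul, abs_of_nonneg (by positivity : 0 ≤ ‖ξ‖ + ‖ζ‖),
    abs_of_pos (mul_pos hP hQ), div_le_iff₀ (mul_pos hP hQ), ← div_eq_mul_inv,
    div_mul_eq_mul_div, le_div_iff₀ (by positivity)]
  linarith

end Nelson

/-- the UV-regularized Nelson model `W(ξ,t) = -1/(1+|ξ|²+|t|²)` in
`d = 3` satisfies `|∇_ξ Q(x,ξ,a)| ≤ C (1+|a|)^{-1}`, hence (H2), and also (H1). -/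
theorem nelson_satisfies_H1_H2 :
    (∃ C : ℝ, ∀ x : Inc 3, ∀ a : ℝ, 0 ≤ a → ∀ ξ : Ed 3,
        ‖gradient (fun ζ => Q WN x ζ a) ξ‖ ≤ C * (1 + |a|)⁻¹) ∧
    H2 WN ∧ H1 WN := by
  have hW : Measurable (Function.uncurry WN) := continuous_uncurry_WN.measurable
  have hL : ∀ ξ ζ u, 0 ≤ u → |WN ξ u - WN ζ u| ≤ 4 * ‖ξ - ζ‖ * ((1 + u) ^ 3)⁻¹ :=
    fun ξ ζ _ => abs_WN_sub_le ξ ζ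
  refine ⟨⟨4 / 2, fun x a ha ξ => ?_⟩, H2_of_abs_sub_le hW (by norm_num) hL,
    H1_of_abs_le_inv_one_add_sq abs_WN_le⟩
  rw [abs_of_nonneg ha]
  exact norm_gradient_Q_le hW (by norm_num) hL x ha ξ
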